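/- arXiv:2209.10324 — 3 statements merged into one kernel-verified Lean document; each statement's English description precedes it below -/
import Mathlib

section
/- Let n ≥ 1 and let a : ℕ → ℕ be periodic with period 2n (i.e., a(j + 2n) = a(j) for all j) with period sum ∑_{k=0}^{2n−1} a(k) ≤ n − 1. Then there exists an even index i with i < 2n such that for every j > 0, 2 · ∑_{k=0}^{j−1} a(i + k) < j. -/
/-- For any sequence of period `2n` with period sum at most `n - 1`, some even rotation is
rotate-bounded: every prefix sum from that index is strictly less than half the prefix length. -/
theorem stmt_4 (n : ℕ) (hn : 1 ≤ n) (a : ℕ → ℕ)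
    (hper : ∀ j, a (j + 2 * n) = a j)
    (hsum : ∑ k ∈ Finset.range (2 * n), a k ≤ n - 1) :
    ∃ i, i < 2 * n ∧ Even i ∧
      ∀ j, 0 < j → 2 * ∑ k ∈ Finset.range j, a (i + k) < j := by
  set F : ℕ → ℤ := fun j => 2 * (∑ k ∈ Finset.range j, (a k : ℤ)) - j with hF
  have hshift : ∀ i t, F (i + t) = F i + (2 * (∑ k ∈ Finset.range t, (a (i + k) : ℤ)) - t) := by
    intro i t
    simp only [hF, Finset.sum_range_add]
    push_cast
    ring
  have hper2 : ∀ j, F (2 * n + j) = F (2 * n) + F j := by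
    intro j
    rw [hshift]
    have : ∀ k, a (2 * n + k) = a k := by
      intro k; rw [Nat.add_comm]; exact hper k
    simp only [this, hF]
  have hFtop : F (2 * n) ≤ -2 := by
    have h1 : (∑ k ∈ Finset.range (2 * n), a k) + 1 ≤ n := by omega
    have h2 : ((∑ k ∈ Finset.range (2 * n), a k : ℕ) : ℤ) + 1 ≤ n := by exact_mod_cast h1
    have h3 : (∑ k ∈ Finset.range (2 * n), (a k : ℤ)) = ((∑ k ∈ Finset.range (2 * n), a k : ℕ) : ℤ) := by
      push_cast; ring
    simp only [hF, h3]
    push_cast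
    linarith
  have hmul : ∀ q j, F (2 * n * q + j) = q * F (2 * n) + F j := by
    intro q
    induction q with
    | zero => intro j; simp
    | succ q ih =>
      intro j
      have : 2 * n * (q + 1) + j = 2 * n + (2 * n * q + j) := by ring
      rw [this, hper2, ih]
      push_cast
      ring
  -- choose i' as the last argmax of m ↦ F (2*m) on range n
  have hrne : (Finset.range n).Nonempty := ⟨0, Finset.mem_range.mpr hn⟩
  have hine : ((Finset.range n).image (fun m => F (2 * m))).Nonempty := hrne.image _
  set M := ((Finset.range n).image (fun m => F (2 * m))).max' hine with hM
  have hMmax : ∀ m, m < n → F (2 * m) ≤ M := by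
    intro m hm
    have hmem : F (2 * m) ∈ (Finset.range n).image (fun m => F (2 * m)) :=
      Finset.mem_image_of_mem _ (Finset.mem_range.mpr hm)
    exact Finset.le_max' _ _ hmem
  have hsne : ((Finset.range n).filter (fun m => F (2 * m) = M)).Nonempty := by
    obtain ⟨m, hm, hmM⟩ := Finset.mem_image.mp (Finset.max'_mem _ hine)
    exact ⟨m, Finset.mem_filter.mpr ⟨hm, hmM⟩⟩
  set i' := ((Finset.range n).filter (fun m => F (2 * m) = M)).max' hsne with hi'
  have hi'mem := Finset.max'_mem _ hsne
  rw [← hi'] at hi'mem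
  have hi'n : i' < n := Finset.mem_range.mp (Finset.mem_filter.mp hi'mem).1
  have hi'M : F (2 * i') = M := (Finset.mem_filter.mp hi'mem).2
  have hlast : ∀ m, i' < m → m < n → F (2 * m) < M := by
    intro m him hmn
    rcases lt_or_eq_of_le (hMmax m hmn) with h | h
    · exact h
    · exfalso
      have : m ∈ (Finset.range n).filter (fun m => F (2 * m) = M) :=
        Finset.mem_filter.mpr ⟨Finset.mem_range.mpr hmn, h⟩
      have := Finset.le_max' _ m this
      omega
  have key : ∀ m, i' < m → F (2 * m) < F (2 * i') := by
    intro m him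
    rw [hi'M]
    have hdecomp : 2 * m = 2 * n * (m / n) + 2 * (m % n) := by
      have := Nat.div_add_mod m n
      ring_nf
      omega
    rw [hdecomp, hmul]
    have hrn : m % n < n := Nat.mod_lt _ (by omega)
    rcases Nat.eq_zero_or_pos (m / n) with hq | hq
    · have hmn : m < n := by
        by_contra h
        have h1 := (Nat.one_le_div_iff (by omega : 0 < n)).mpr (by omega : n ≤ m)
        omega
      have hmm : m % n = m := Nat.mod_eq_of_lt hmn
      have hlt := hlast m him hmn
      rw [hmm]
      simp only [hq, Nat.cast_zero, zero_mul, zero_add]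
      linarith
    · have h1 : F (2 * (m % n)) ≤ M := hMmax _ hrn
      have h2 : ((m / n : ℕ) : ℤ) ≥ 1 := by exact_mod_cast hq
      have h3 : ((m / n : ℕ) : ℤ) * F (2 * n) ≤ 1 * (-2) := by
        calc ((m / n : ℕ) : ℤ) * F (2 * n) ≤ ((m / n : ℕ) : ℤ) * (-2) := by
              exact mul_le_mul_of_nonneg_left hFtop (by linarith)
          _ ≤ 1 * (-2) := by nlinarith
      linarith
  -- even window bound in ℕ
  have heven : ∀ m', 0 < m' → 2 * ∑ k ∈ Finset.range (2 * m'), a (2 * i' + k) < 2 * m' := by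
    intro m' hm'
    have hk := key (i' + m') (by omega)
    have hs := hshift (2 * i') (2 * m')
    have he : 2 * i' + 2 * m' = 2 * (i' + m') := by ring
    rw [he] at hs
    have hcast : (∑ k ∈ Finset.range (2 * m'), (a (2 * i' + k) : ℤ))
        = ((∑ k ∈ Finset.range (2 * m'), a (2 * i' + k) : ℕ) : ℤ) := by push_cast; ring
    rw [hcast] at hs
    have : 2 * ((∑ k ∈ Finset.range (2 * m'), a (2 * i' + k) : ℕ) : ℤ) < (2 * m' : ℕ) := by
      push_cast
      push_cast at hs
      linarith
    exact_mod_cast this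
  refine ⟨2 * i', by omega, ⟨i', by ring⟩, ?_⟩
  intro j hj
  rcases Nat.even_or_odd j with ⟨m', hm'⟩ | ⟨m', hm'⟩
  · have hj2 : j = 2 * m' := by omega
    subst hj2
    exact heven m' (by omega)
  · have h1 := heven (m' + 1) (by omega)
    have hsub : ∑ k ∈ Finset.range j, a (2 * i' + k)
        ≤ ∑ k ∈ Finset.range (2 * (m' + 1)), a (2 * i' + k) := by
      apply Finset.sum_le_sum_of_subset
      apply Finset.range_subset_range.mpr
      omega
    omega
end

section
/- Let n ≥ 1 and let a : ℕ → ℕ be periodic with period 2n (i.e., a(j + 2n) = a(j) for all j) with period sum ∑_{k=0}^{2n−1} a(k) ≤ n − 1. Then there exists an odd index i with i < 2n such that for every j > 0, 2 · ∑_{k=0}^{j−1} a(i + k) < j. -/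
/-!
Write `g m = excess a m = 2 (a 0 + ⋯ + a (m-1)) - m`. Index `i` is rotate-bounded exactly when
`g m < g i` for every `m > i`. Over one period `g` drops by `2n - 2 ∑ a ≥ 2`, so every index
`m ≥ 2n` is beaten by its residue mod `2n`. Hence it suffices to take the last odd index of
`[0, 2n)` at which `g` is maximal among odd indices: every later odd index has smaller `g`, and an
even index `m` cannot reach `g i`, because `g m ≡ m` and `g i ≡ i (mod 2)` differ in parity while
`g (m + 1) ≥ g m - 1`.
-/

open Finset Function

theorem Function.Periodic.sum_range_add {M : Type*} [AddCommMonoid M] {a : ℕ → M} {p : ℕ}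
    (hper : Periodic a p) (m : ℕ) : ∑ k ∈ range p, a (m + k) = ∑ k ∈ range p, a k := by
  induction m with
  | zero => simp
  | succ m ih =>
    rcases p with _ | q
    · simp
    · rw [← ih, sum_range_succ, sum_range_succ' (fun k => a (m + k)), add_zero,
        show m + 1 + q = m + (q + 1) by ring, hper]
      simp only [add_assoc, add_comm 1]

def RotateBounded (a : ℕ → ℕ) (i : ℕ) : Prop :=
  ∀ j, 0 < j → 2 * ∑ k ∈ range j, a (i + k) < j

def excess (a : ℕ → ℕ) (m : ℕ) : ℤ :=
  2 * ∑ k ∈ range m, (a k : ℤ) - m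

theorem excess_add (a : ℕ → ℕ) (i j : ℕ) :
    excess a (i + j) = excess a i + (2 * ∑ k ∈ range j, (a (i + k) : ℤ) - j) := by
  simp only [excess, sum_range_add]
  push_cast
  ring

theorem excess_succ (a : ℕ → ℕ) (m : ℕ) : excess a (m + 1) = excess a m + 2 * a m - 1 := by
  rw [excess_add]
  simp only [sum_range_one, add_zero]
  push_cast
  ring

theorem even_excess_add_self (a : ℕ → ℕ) (m : ℕ) : Even (excess a m + m) :=
  ⟨∑ k ∈ range m, (a k : ℤ), by rw [excess]; ring⟩

section Excess

variable {a : ℕ → ℕ}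

theorem excess_add_mul_add_le {p : ℕ} (hper : Periodic a p)
    (hdrop : 2 * ∑ k ∈ range p, a k < p) (m q : ℕ) : excess a (m + p * q) + q ≤ excess a m := by
  have hdrop' : 2 * ∑ k ∈ range p, (a k : ℤ) < p := by exact_mod_cast hdrop
  induction q with
  | zero => simp
  | succ q ih =>
    rw [show m + p * (q + 1) = m + p * q + p by ring, excess_add,
      Periodic.sum_range_add (a := fun k => (a k : ℤ)) fun k => congrArg Nat.cast (hper k)]
    push_cast
    linarith

theorem excess_lt_excess_mod {p m : ℕ} (hper : Periodic a p)
    (hdrop : 2 * ∑ k ∈ range p, a k < p) (hm : p ≤ m) : excess a m < excess a (m % p) := by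
  have hq : 0 < m / p := Nat.div_pos hm (by omega)
  have := excess_add_mul_add_le hper hdrop (m % p) (m / p)
  rw [Nat.mod_add_div] at this
  omega

theorem excess_lt_of_forall_odd {i : ℕ} (hi : Odd i)
    (hodd : ∀ m, Odd m → i < m → excess a m < excess a i) :
    ∀ m, i < m → excess a m < excess a i := by
  intro m him
  rcases Nat.even_or_odd m with hm | hm
  · by_contra! hge
    have hne : excess a m ≠ excess a i := by
      obtain ⟨r, hr⟩ := even_excess_add_self a m
      obtain ⟨s, hs⟩ := even_excess_add_self a i
      obtain ⟨u, rfl⟩ := hm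
      obtain ⟨v, rfl⟩ := hi
      push_cast at hr hs
      omega
    have hnext := hodd (m + 1) hm.add_one (by omega)
    rw [excess_succ] at hnext
    omega
  · exact hodd m hm him

theorem rotateBounded_of_excess_lt {i : ℕ} (h : ∀ m, i < m → excess a m < excess a i) :
    RotateBounded a i := by
  intro j hj
  have := h (i + j) (by omega)
  rw [excess_add] at this
  exact_mod_cast (by linarith : 2 * ∑ k ∈ range j, (a (i + k) : ℤ) < j)

theorem exists_odd_rotateBounded {p : ℕ} (hper : Periodic a p) (hp : Even p)
    (hdrop : 2 * ∑ k ∈ range p, a k < p) : ∃ i, i < p ∧ Odd i ∧ RotateBounded a i := by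
  set O := (range p).filter Odd
  have h1O : 1 ∈ O := by
    obtain ⟨r, rfl⟩ := hp
    simp only [O, mem_filter, mem_range]
    exact ⟨by omega, odd_one⟩
  obtain ⟨i, hiO, hmax⟩ := O.exists_max_image (fun m => toLex (excess a m, m)) ⟨1, h1O⟩
  simp only [O, mem_filter, mem_range, Prod.Lex.toLex_le_toLex, and_imp] at hiO hmax
  refine ⟨i, hiO.1, hiO.2, rotateBounded_of_excess_lt (excess_lt_of_forall_odd hiO.2 ?_)⟩
  intro m hm him
  rcases lt_or_ge m p with hmp | hpm
  · have := hmax m hmp hm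
    omega
  · have := hmax (m % p) (Nat.mod_lt m (by omega)) (hm.mod_even hp)
    have := excess_lt_excess_mod hper hdrop hpm
    omega

end Excess

/-- For any sequence of period `2n` with period sum at most `n - 1`, some odd rotation is
rotate-bounded: every prefix sum from that index is strictly less than half the prefix length. -/
theorem stmt_5 (n : ℕ) (hn : 1 ≤ n) (a : ℕ → ℕ)
    (hper : ∀ j, a (j + 2 * n) = a j)
    (hsum : ∑ k ∈ Finset.range (2 * n), a k ≤ n - 1) :
    ∃ i, i < 2 * n ∧ Odd i ∧
      ∀ j, 0 < j → 2 * ∑ k ∈ Finset.range j, a (i + k) < j :=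
  exists_odd_rotateBounded hper (even_two_mul n) (by omega)
end

section
/- Let n ≥ 1 and let a : ℕ → ℕ be periodic with period 2n (i.e., a(j + 2n) = a(j) for all j) with period sum ∑_{k=0}^{2n−1} a(k) ≤ n − 1. Define B(j) = ∑_{k=0}^{j−1} a(k) and C(j) = 2·B(j) − j as an integer. Suppose j* < 2n is the largest maximizer of C within the first period, i.e., C(j) ≤ C(j*) for all j < 2n, and C(j) < C(j*) for all j with j* < j < 2n. Then C(j) < C(j*) for every j > j*, and consequently for every j > 0, 2 · ∑_{k=0}^{j−1} a(j* + k) < j (i.e., the sequence is rotate-bounded starting at index j*). -/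
/-!
Over a full period the deviation changes by the fixed amount `C(2n) = 2·∑ a - 2n ≤ -2`, so
`C(r + q·2n) = C(r) + q·C(2n) < C(r) ≤ C(j*)` for `q ≥ 1`; together with the strict maximality of
`C(j*)` on the rest of the first period this gives `C(j) < C(j*)` for all `j > j*`. Since
`C(j* + j) = C(j*) + C'(j)` for the deviation `C'` of the sequence shifted by `j*`, this says
exactly `C'(j) < 0` for `j > 0`, i.e. rotate-boundedness at `j*`.
-/

/-- The integer deviation `C(j) = 2·B(j) − j` of the prefix sums `B` of `a`. -/
def devC (a : ℕ → ℕ) (j : ℕ) : ℤ := 2 * (∑ k ∈ Finset.range j, (a k : ℤ)) - j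

open Finset

theorem devC_zero (a : ℕ → ℕ) : devC a 0 = 0 := by
  simp [devC]

theorem devC_neg_iff (a : ℕ → ℕ) (j : ℕ) : devC a j < 0 ↔ 2 * ∑ k ∈ range j, a k < j := by
  rw [devC, sub_neg]
  norm_cast

theorem devC_add (a : ℕ → ℕ) (i j : ℕ) :
    devC a (i + j) = devC a i + devC (fun k => a (i + k)) j := by
  simp only [devC, sum_range_add]
  push_cast
  ring

theorem devC_add_period {a : ℕ → ℕ} {p : ℕ} (ha : Function.Periodic a p) (j : ℕ) :
    devC a (j + p) = devC a j + devC a p := by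
  have hshift : (fun k => a (p + k)) = a := funext fun k => by rw [add_comm]; exact ha k
  rw [add_comm j, devC_add, hshift, add_comm]

theorem devC_add_mul_period {a : ℕ → ℕ} {p : ℕ} (ha : Function.Periodic a p) (j q : ℕ) :
    devC a (j + q * p) = devC a j + q * devC a p := by
  induction q with
  | zero => simp
  | succ q ih =>
    rw [add_mul, one_mul, ← add_assoc, devC_add_period ha, ih]
    push_cast
    ring

theorem devC_lt_of_strictMax_on_period {a : ℕ → ℕ} {p : ℕ} (ha : Function.Periodic a p)
    (hp : devC a p < 0)
    {js : ℕ} (hmax : ∀ j < p, devC a j ≤ devC a js)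
    (hstrict : ∀ j, js < j → j < p → devC a j < devC a js) :
    ∀ j, js < j → devC a j < devC a js := by
  intro j hj
  have hp_pos : 0 < p := Nat.pos_of_ne_zero fun h => by simp [h, devC_zero] at hp
  rcases lt_or_ge j p with hjp | hpj
  · exact hstrict j hj hjp
  · have hq : (1 : ℤ) ≤ (j / p : ℕ) := by exact_mod_cast (Nat.div_pos hpj hp_pos)
    have hdecomp := devC_add_mul_period ha (j % p) (j / p)
    rw [Nat.mod_add_div'] at hdecomp
    have hr := hmax (j % p) (Nat.mod_lt j hp_pos)
    nlinarith

theorem two_mul_sum_shift_lt {a : ℕ → ℕ} {js : ℕ}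
    (hlt : ∀ j, js < j → devC a j < devC a js) {j : ℕ} (hj : 0 < j) :
    2 * ∑ k ∈ range j, a (js + k) < j := by
  rw [← devC_neg_iff]
  have := devC_add a js j
  linarith [hlt (js + j) (by omega)]

theorem stmt_8_general (n : ℕ) (hn : 1 ≤ n) (a : ℕ → ℕ)
    (hper : ∀ j, a (j + 2 * n) = a j)
    (hsum : ∑ k ∈ Finset.range (2 * n), a k ≤ n - 1)
    (js : ℕ)
    (hmax : ∀ j, j < 2 * n → devC a j ≤ devC a js)
    (hstrict : ∀ j, js < j → j < 2 * n → devC a j < devC a js) :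
    (∀ j, js < j → devC a j < devC a js) ∧
      (∀ j, 0 < j → 2 * ∑ k ∈ Finset.range j, a (js + k) < j) := by
  have hperiod : devC a (2 * n) < 0 := (devC_neg_iff a _).mpr (by omega)
  have hlt := devC_lt_of_strictMax_on_period hper hperiod hmax hstrict
  exact ⟨hlt, fun _ => two_mul_sum_shift_lt hlt⟩

/-- For a sequence of period `2n` with period sum at most `n - 1`, if `js < 2n` is the
largest maximizer of the deviation `C` within the first period, then `C(j) < C(js)` for
every `j > js`, and consequently the sequence is rotate-bounded starting at index `js`. -/
theorem stmt_8 (n : ℕ) (hn : 1 ≤ n) (a : ℕ → ℕ)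
    (hper : ∀ j, a (j + 2 * n) = a j)
    (hsum : ∑ k ∈ Finset.range (2 * n), a k ≤ n - 1)
    (js : ℕ) (hjs : js < 2 * n)
    (hmax : ∀ j, j < 2 * n → devC a j ≤ devC a js)
    (hstrict : ∀ j, js < j → j < 2 * n → devC a j < devC a js) :
    (∀ j, js < j → devC a j < devC a js) ∧
      (∀ j, 0 < j → 2 * ∑ k ∈ Finset.range j, a (js + k) < j) :=
  stmt_8_general n hn a hper hsum js hmax hstrict
end
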